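/- The trace-norm resource generating power is monotone under composition with free channels: if M₁ and M₂ are channels that each map ℱ into ℱ, then for every channel N, Ω₁(M₁ ∘ N ∘ M₂) ≤ Ω₁(N). -/

import Mathlib

open scoped Kronecker ComplexOrder

variable {ι : Type*} [Fintype ι] [DecidableEq ι]

/-- A quantum state: positive semidefinite matrix of trace one. -/
def IsState (ρ : Matrix ι ι ℂ) : Prop := ρ.PosSemidef ∧ ρ.trace = 1

/-- The action of `id_n ⊗ N` on block matrices. -/
def idTensorMap (n : ℕ) (N : Matrix ι ι ℂ →ₗ[ℂ] Matrix ι ι ℂ)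
    (M : Matrix (Fin n × ι) (Fin n × ι) ℂ) : Matrix (Fin n × ι) (Fin n × ι) ℂ :=
  Matrix.of fun p q => N (Matrix.of fun k l => M (p.1, k) (q.1, l)) p.2 q.2

/-- A quantum channel: completely positive trace preserving linear map. -/
structure Channel (ι : Type*) [Fintype ι] [DecidableEq ι] where
  map : Matrix ι ι ℂ →ₗ[ℂ] Matrix ι ι ℂ
  cp : ∀ (n : ℕ) (M : Matrix (Fin n × ι) (Fin n × ι) ℂ), M.PosSemidef →
        (idTensorMap n map M).PosSemidef
  tp : ∀ A : Matrix ι ι ℂ, (map A).trace = A.trace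

/-- The trace norm ‖A‖₁ = Tr √(AᴴA). -/
noncomputable def traceNorm (A : Matrix ι ι ℂ) : ℝ :=
  ((Matrix.posSemidef_conjTranspose_mul_self A).1.eigenvectorUnitary.1 *
      Matrix.diagonal (((↑) : ℝ → ℂ) ∘ (√·) ∘ (Matrix.posSemidef_conjTranspose_mul_self A).1.eigenvalues) *
      (star (Matrix.posSemidef_conjTranspose_mul_self A).1.eigenvectorUnitary : Matrix ι ι ℂ)).trace.re

/-- Trace-norm resource measure ω₁. -/
noncomputable def omega1 (F : Set (Matrix ι ι ℂ)) (ρ : Matrix ι ι ℂ) : ℝ :=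
  (1/2) * sInf ((fun σ => traceNorm (ρ - σ)) '' F)

/-- Trace-norm resource generating power Ω₁. -/
noncomputable def genPower1 (F : Set (Matrix ι ι ℂ)) (N : Matrix ι ι ℂ → Matrix ι ι ℂ) : ℝ :=
  sSup ((fun ρ => omega1 F (N ρ)) '' F)

/-- Trace-norm resource increasing power Ω̃₁. -/
noncomputable def incPower1 (F : Set (Matrix ι ι ℂ)) (N : Matrix ι ι ℂ → Matrix ι ι ℂ) : ℝ :=
  sSup ((fun ρ => omega1 F (N ρ) - omega1 F ρ) '' {ρ | IsState ρ})

/-- Holevo–Helstrom success probability of discriminating two channels with probe `ρ`. -/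
noncomputable def psuccPair (N M : Matrix ι ι ℂ → Matrix ι ι ℂ) (ρ : Matrix ι ι ℂ) : ℝ :=
  1/2 + (1/4) * traceNorm (N ρ - M ρ)

/-- Success probability of discriminating `N` from the set of channels `Free` with probe `ρ`. -/
noncomputable def psuccChan (N : Matrix ι ι ℂ → Matrix ι ι ℂ) (Free : Set (Channel ι))
    (ρ : Matrix ι ι ℂ) : ℝ :=
  sInf ((fun M : Channel ι => psuccPair N (⇑M.map) ρ) '' Free)

/-- Maximum success probability of discriminating `N` from `Free` using probes from `F`. -/
noncomputable def psuccFF (N : Matrix ι ι ℂ → Matrix ι ι ℂ) (Free : Set (Channel ι))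
    (F : Set (Matrix ι ι ℂ)) : ℝ :=
  sSup ((fun ρ => psuccChan N Free ρ) '' F)

/-! A free channel `M` cannot increase `ω₁`: it maps the free states into themselves and contracts
the trace distance between Hermitian matrices. The contraction comes from the Jordan decomposition
`A = A⁺ - A⁻`, since a positive trace-preserving map keeps `A⁺, A⁻` positive with the same traces
and `‖X - Y‖₁ ≤ tr X + tr Y` for positive `X, Y`. Hence
`ω₁(M₁ (N (M₂ ρ))) ≤ ω₁(N (M₂ ρ)) ≤ Ω₁(N)`, because `M₂ ρ` is again a free state. -/

open Matrix
open scoped MatrixOrder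

section TraceNorm

lemma traceNorm_eq_re_trace_abs (A : Matrix ι ι ℂ) : traceNorm A = (CFC.abs A).trace.re := by
  have h : (star A * A).PosSemidef := posSemidef_conjTranspose_mul_self A
  rw [CFC.abs, CFC.sqrt_eq_cfc, cfc_nnreal_eq_real _ _ h.nonneg, h.1.cfc_eq,
    IsHermitian.cfc, Unitary.conjStarAlgAut_apply, traceNorm]
  simp only [Real.sqrt.eq_1]
  rfl

omit [DecidableEq ι] in
lemma re_trace_nonneg {A : Matrix ι ι ℂ} (hA : 0 ≤ A) : 0 ≤ A.trace.re :=
  (Complex.nonneg_iff.mp hA.posSemidef.trace_nonneg).1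

lemma traceNorm_nonneg (A : Matrix ι ι ℂ) : 0 ≤ traceNorm A :=
  traceNorm_eq_re_trace_abs A ▸ re_trace_nonneg (CFC.abs_nonneg A)

lemma trace_mul_nonneg {A B : Matrix ι ι ℂ} (hA : 0 ≤ A) (hB : 0 ≤ B) : 0 ≤ (A * B).trace := by
  have hconj := (star_left_conjugate_nonneg hB (CFC.sqrt A)).posSemidef.trace_nonneg
  rwa [(CFC.sqrt_nonneg A).star_eq, trace_mul_cycle, CFC.sqrt_mul_sqrt_self A hA] at hconj

lemma exists_mul_eq_abs {A : Matrix ι ι ℂ} (hA : IsSelfAdjoint A) :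
    ∃ W : Matrix ι ι ℂ, W * A = CFC.abs A ∧ W ≤ 1 ∧ -1 ≤ W := by
  have hcont (f : ℝ → ℝ) : ContinuousOn f (spectrum ℝ A) := A.finite_real_spectrum.continuousOn f
  let s : ℝ → ℝ := fun x => if 0 ≤ x then 1 else -1
  refine ⟨cfc s A, ?_, ?_, ?_⟩
  · rw [CFC.abs_eq_cfc_norm A hA]
    conv_lhs => arg 2; rw [← cfc_id' ℝ A]
    rw [← cfc_mul s _ A (hcont _) (hcont _)]
    refine cfc_congr fun x _ => ?_
    by_cases hx : 0 ≤ x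
    · simp [s, hx, abs_of_nonneg hx]
    · simp [s, hx, abs_of_neg (not_le.mp hx)]
  · exact cfc_le_one s A fun x _ => by by_cases hx : 0 ≤ x <;> simp [s, hx]
  · simpa using algebraMap_le_cfc s (-1) A (fun x _ => by by_cases hx : 0 ≤ x <;> simp [s, hx])
      (hcont s)

/-- With `W` the sign of `X - Y`, `‖X - Y‖₁ = tr (W X) - tr (W Y)`, and `-1 ≤ W ≤ 1` bounds
each term by a trace. -/
lemma traceNorm_sub_le {X Y : Matrix ι ι ℂ} (hX : 0 ≤ X) (hY : 0 ≤ Y) :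
    traceNorm (X - Y) ≤ X.trace.re + Y.trace.re := by
  obtain ⟨W, hWA, hW₁, hW₂⟩ := exists_mul_eq_abs (hX.isSelfAdjoint.sub hY.isSelfAdjoint)
  have hWX : 0 ≤ ((1 - W) * X).trace.re :=
    (Complex.nonneg_iff.mp (trace_mul_nonneg (sub_nonneg.mpr hW₁) hX)).1
  have hWY : 0 ≤ ((W - -1) * Y).trace.re :=
    (Complex.nonneg_iff.mp (trace_mul_nonneg (sub_nonneg.mpr hW₂) hY)).1
  rw [traceNorm_eq_re_trace_abs, ← hWA]
  simp only [sub_mul, mul_sub, neg_mul, one_mul, trace_sub, trace_neg, Complex.sub_re,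
    Complex.neg_re] at hWX hWY ⊢
  linarith

lemma traceNorm_eq_re_trace_posPart_add_negPart {A : Matrix ι ι ℂ} (hA : IsSelfAdjoint A) :
    traceNorm A = (A⁺).trace.re + (A⁻).trace.re := by
  rw [traceNorm_eq_re_trace_abs, ← CFC.posPart_add_negPart A hA, trace_add, Complex.add_re]

lemma traceNorm_map_le (Φ : Matrix ι ι ℂ →ₗ[ℂ] Matrix ι ι ℂ) (hΦ : ∀ B, 0 ≤ B → 0 ≤ Φ B)
    (hΦtr : ∀ B, (Φ B).trace = B.trace) {A : Matrix ι ι ℂ} (hA : IsSelfAdjoint A) :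
    traceNorm (Φ A) ≤ traceNorm A :=
  calc traceNorm (Φ A) = traceNorm (Φ A⁺ - Φ A⁻) := by
        rw [← map_sub, CFC.posPart_sub_negPart A hA]
    _ ≤ (Φ A⁺).trace.re + (Φ A⁻).trace.re :=
        traceNorm_sub_le (hΦ _ (CFC.posPart_nonneg A)) (hΦ _ (CFC.negPart_nonneg A))
    _ = traceNorm A := by rw [hΦtr, hΦtr, traceNorm_eq_re_trace_posPart_add_negPart hA]

end TraceNorm

namespace Channel

lemma posSemidef_map (C : Channel ι) {A : Matrix ι ι ℂ} (hA : A.PosSemidef) :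
    (C.map A).PosSemidef := by
  have h := C.cp 1 (A.submatrix Prod.snd Prod.snd) (hA.submatrix _)
  have he : C.map A = (idTensorMap 1 C.map (A.submatrix Prod.snd Prod.snd)).submatrix
      (fun i => ((0 : Fin 1), i)) (fun i => ((0 : Fin 1), i)) := rfl
  exact he ▸ h.submatrix _

lemma isState_map (C : Channel ι) {ρ : Matrix ι ι ℂ} (hρ : IsState ρ) : IsState (C.map ρ) :=
  ⟨C.posSemidef_map hρ.1, by rw [C.tp, hρ.2]⟩

lemma traceNorm_map_le (C : Channel ι) {A : Matrix ι ι ℂ} (hA : IsSelfAdjoint A) :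
    traceNorm (C.map A) ≤ traceNorm A :=
  _root_.traceNorm_map_le C.map (fun _ hB => (C.posSemidef_map hB.posSemidef).nonneg) C.tp hA

end Channel

section ResourceMeasure

variable {F : Set (Matrix ι ι ℂ)}

lemma bddBelow_image_traceNorm_sub (F : Set (Matrix ι ι ℂ)) (ρ : Matrix ι ι ℂ) :
    BddBelow ((fun σ => traceNorm (ρ - σ)) '' F) :=
  ⟨0, by rintro _ ⟨σ, _, rfl⟩; exact traceNorm_nonneg _⟩

lemma omega1_nonneg (F : Set (Matrix ι ι ℂ)) (ρ : Matrix ι ι ℂ) : 0 ≤ omega1 F ρ :=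
  mul_nonneg (by norm_num) (Real.sInf_nonneg (by rintro _ ⟨σ, _, rfl⟩; exact traceNorm_nonneg _))

lemma omega1_le_of_mem (ρ : Matrix ι ι ℂ) {σ : Matrix ι ι ℂ} (hσ : σ ∈ F) :
    omega1 F ρ ≤ 1 / 2 * traceNorm (ρ - σ) := by
  unfold omega1
  gcongr
  exact csInf_le (bddBelow_image_traceNorm_sub F ρ) ⟨σ, hσ, rfl⟩

lemma omega1_le_one {ρ σ : Matrix ι ι ℂ} (hρ : IsState ρ) (hσ : σ ∈ F) (hσF : IsState σ) :
    omega1 F ρ ≤ 1 := by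
  have h := traceNorm_sub_le hρ.1.nonneg hσF.1.nonneg
  rw [hρ.2, hσF.2, Complex.one_re] at h
  linarith [omega1_le_of_mem ρ hσ]

lemma omega1_map_le (hF : ∀ σ ∈ F, IsSelfAdjoint σ) (hFne : F.Nonempty) (C : Channel ι)
    (hC : ∀ σ ∈ F, C.map σ ∈ F) {ρ : Matrix ι ι ℂ} (hρ : IsSelfAdjoint ρ) :
    omega1 F (C.map ρ) ≤ omega1 F ρ := by
  refine mul_le_mul_of_nonneg_left (le_csInf (hFne.image _) ?_) (by norm_num)
  rintro _ ⟨σ, hσ, rfl⟩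
  have hcontract : traceNorm (C.map ρ - C.map σ) ≤ traceNorm (ρ - σ) := by
    rw [← map_sub]
    exact C.traceNorm_map_le (hρ.sub (hF σ hσ))
  exact (csInf_le (bddBelow_image_traceNorm_sub F _) ⟨C.map σ, hC σ hσ, rfl⟩).trans hcontract

lemma genPower1_nonneg (F : Set (Matrix ι ι ℂ)) (N : Matrix ι ι ℂ → Matrix ι ι ℂ) :
    0 ≤ genPower1 F N :=
  Real.sSup_nonneg (by rintro _ ⟨ρ, _, rfl⟩; exact omega1_nonneg F _)

lemma omega1_le_genPower1 (hF : ∀ σ ∈ F, IsState σ) (N : Channel ι) {ρ : Matrix ι ι ℂ}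
    (hρ : ρ ∈ F) : omega1 F (N.map ρ) ≤ genPower1 F N.map := by
  refine le_csSup ⟨1, ?_⟩ ⟨ρ, hρ, rfl⟩
  rintro _ ⟨τ, hτ, rfl⟩
  exact omega1_le_one (N.isState_map (hF τ hτ)) hτ (hF τ hτ)

end ResourceMeasure

theorem stmt4_general
    (F : Set (Matrix ι ι ℂ)) (hFstate : ∀ ρ ∈ F, IsState ρ)
    (N M₁ M₂ : Channel ι)
    (hM₁ : ∀ ρ ∈ F, M₁.map ρ ∈ F) (hM₂ : ∀ ρ ∈ F, M₂.map ρ ∈ F) :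
    genPower1 F (fun ρ => M₁.map (N.map (M₂.map ρ))) ≤ genPower1 F (⇑N.map) := by
  refine Real.sSup_le ?_ (genPower1_nonneg F _)
  rintro _ ⟨ρ, hρ, rfl⟩
  have hτ : IsState (N.map (M₂.map ρ)) := N.isState_map (hFstate _ (hM₂ ρ hρ))
  calc omega1 F (M₁.map (N.map (M₂.map ρ))) ≤ omega1 F (N.map (M₂.map ρ)) :=
        omega1_map_le (fun σ hσ => (hFstate σ hσ).1.isHermitian) ⟨ρ, hρ⟩ M₁ hM₁ hτ.1.isHermitian
    _ ≤ genPower1 F N.map := omega1_le_genPower1 hFstate N (hM₂ ρ hρ)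

/-- monotonicity of Ω₁ under left and right composition with free channels. -/
theorem stmt4
    (F : Set (Matrix ι ι ℂ)) (hFne : F.Nonempty) (hFstate : ∀ ρ ∈ F, IsState ρ)
    (hFconv : Convex ℝ F) (hFclosed : IsClosed F)
    (N M₁ M₂ : Channel ι)
    (hM₁ : ∀ ρ ∈ F, M₁.map ρ ∈ F) (hM₂ : ∀ ρ ∈ F, M₂.map ρ ∈ F) :
    genPower1 F (fun ρ => M₁.map (N.map (M₂.map ρ))) ≤ genPower1 F (⇑N.map) :=
  stmt4_general F hFstate N M₁ M₂ hM₁ hM₂
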